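/- Let n ≥ 3 and let C_n be the cycle graph of length n. Then v(J(C_n)) ≤ α₀(C_n), the minimum cardinality of a vertex cover of C_n; moreover, if n ≠ 4, then v(J(C_n)) ≤ bight(I(C_n)) − 1, where bight(I(C_n)) is the maximum cardinality of a minimal vertex cover of C_n. -/

import Mathlib

/-!
The cover ideal `J(G)` is the intersection of the primes `⟨x_u, x_v⟩` over the edges of `G`. For a
squarefree monomial `f = ∏_{i ∈ S} x_i`, the colon `⟨x_u, x_v⟩ : f` is the whole ring when `S` meets
`{u, v}` and `⟨x_u, x_v⟩` otherwise, so if `S` covers every edge except `{a, b}` and avoids `a, b`,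
then `J(G) : f = ⟨x_a, x_b⟩` is prime and `v(J(G)) ≤ |S|`. In `C_n` the even vertices `≥ 2`,
together with `n - 1`, form such a set for the edge `{0, 1}`, of size `⌊n/2⌋`.

On the other side, each vertex of `C_n` covers two of its `n` edges, so `α₀(C_n) ≥ ⌈n/2⌉`; and the
complement of an independent dominating set is a minimal vertex cover. For the multiples of `3`
below `n - 1`, together with `n - 2` when `n ≡ 1 (mod 3)`, this cover has at least `⌊n/2⌋ + 1`
elements unless `n = 4`.
-/

open MvPolynomial CategoryTheory

noncomputable section

/-- A set of vertices is a vertex cover if it meets every edge. -/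
def IsVertexCover {V : Type} (G : SimpleGraph V) (C : Set V) : Prop :=
  ∀ ⦃u v : V⦄, G.Adj u v → u ∈ C ∨ v ∈ C

/-- A vertex cover minimal with respect to inclusion. -/
def IsMinimalVertexCover {V : Type} (G : SimpleGraph V) (C : Set V) : Prop :=
  IsVertexCover G C ∧ ∀ C' ⊆ C, IsVertexCover G C' → C' = C

/-- `α₀(G)`: the minimum cardinality of a vertex cover of `G`. -/
def coverNumber {V : Type} (G : SimpleGraph V) : ℕ :=
  sInf {k | ∃ C : Set V, IsVertexCover G C ∧ C.ncard = k}

/-- `bight(I(G))`: the maximum cardinality of a minimal vertex cover of `G`. -/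
def bigHeight {V : Type} (G : SimpleGraph V) : ℕ :=
  sSup {k | ∃ C : Set V, IsMinimalVertexCover G C ∧ C.ncard = k}

/-- The edge ideal `I(G) ⊆ K[x_v : v ∈ V]`, generated by the monomials
`x_u * x_v` over the edges `{u,v}` of `G`. -/
def edgeIdeal (K : Type) [Field K] {V : Type} (G : SimpleGraph V) :
    Ideal (MvPolynomial V K) :=
  Ideal.span {m | ∃ u v : V, G.Adj u v ∧ m = X u * X v}

/-- The cover ideal `J(G) = ⋂_{{u,v} ∈ E(G)} ⟨x_u, x_v⟩`. -/
def coverIdeal (K : Type) [Field K] {V : Type} (G : SimpleGraph V) :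
    Ideal (MvPolynomial V K) :=
  ⨅ (u : V) (v : V) (_ : G.Adj u v), Ideal.span {X u, X v}

/-- The v-number of a graded ideal `I`: the least `d ≥ 0` such that there is a
homogeneous polynomial `f` of degree `d` with `I : f` a prime ideal. -/
def vNumber {K : Type} [Field K] {V : Type} (I : Ideal (MvPolynomial V K)) : ℕ :=
  sInf {d | ∃ f : MvPolynomial V K, f.IsHomogeneous d ∧
    (I.colon (Ideal.span {f})).IsPrime}

/-- The homogeneous maximal ideal `⟨x_1, …, x_n⟩` of the polynomial ring. -/
def maxIdeal (K : Type) [Field K] (V : Type) : Ideal (MvPolynomial V K) :=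
  Ideal.span (Set.range (X : V → MvPolynomial V K))

/-- The depth of the module `M` with respect to the ideal `J`: the supremum of
the lengths of regular sequences on `M` consisting of elements of `J`. -/
def mdepth {R : Type} [CommRing R] (J : Ideal R) (M : Type) [AddCommGroup M]
    [Module R M] : ℕ :=
  sSup {k | ∃ rs : List R, rs.length = k ∧ (∀ r ∈ rs, r ∈ J) ∧
    RingTheory.Sequence.IsRegular M rs}

/-- The projective dimension of an `R`-module `M`, characterized by the
vanishing of `Ext^i(M, N)` for all `i > d` and all modules `N`. -/
def projDim (R : Type) [CommRing R] (M : ModuleCat.{0} R) : ℕ :=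
  sInf {d : ℕ | ∀ (N : ModuleCat.{0} R) (i : ℕ), d < i →
    Subsingleton (((Ext R (ModuleCat.{0} R) i).obj (Opposite.op M)).obj N)}


namespace MvPolynomial

variable {σ R : Type*}

section CommSemiring

variable [CommSemiring R]

theorem X_mem_span_X_image_iff [Nontrivial R] {s : Set σ} {i : σ} :
    (X i : MvPolynomial σ R) ∈ Ideal.span (X '' s) ↔ i ∈ s := by
  simp [mem_ideal_span_X_image, support_X, Finsupp.single_apply_eq_zero]

theorem isHomogeneous_prod_X (S : Finset σ) :
    (∏ i ∈ S, X i : MvPolynomial σ R).IsHomogeneous S.card := by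
  simpa using IsHomogeneous.prod S (fun i => (X i : MvPolynomial σ R)) (fun _ => 1)
    fun i _ => isHomogeneous_X R i

end CommSemiring

variable [CommRing R]

theorem ker_aeval_ite_eq_span_X_image (s : Set σ) [DecidablePred (· ∈ s)] :
    RingHom.ker (aeval (fun i => if i ∈ s then 0 else X i) :
      MvPolynomial σ R →ₐ[R] MvPolynomial σ R) = Ideal.span (X '' s) := by
  set φ : MvPolynomial σ R →ₐ[R] MvPolynomial σ R := aeval fun i => if i ∈ s then 0 else X i
  have sub_mem (p : MvPolynomial σ R) : p - φ p ∈ Ideal.span (X '' s) := by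
    induction p using MvPolynomial.induction_on with
    | C c => simp [φ]
    | add p q hp hq => simpa [add_sub_add_comm] using add_mem hp hq
    | mul_X p i hp =>
      by_cases hi : i ∈ s
      · simpa [φ, hi] using
          Ideal.mul_mem_left _ p (Ideal.subset_span (Set.mem_image_of_mem X hi))
      · simpa [φ, hi, sub_mul] using Ideal.mul_mem_right (X i) _ hp
  refine le_antisymm (fun p hp => ?_) (Ideal.span_le.2 ?_)
  · simpa [(RingHom.mem_ker).1 hp] using sub_mem p
  · rintro _ ⟨i, hi, rfl⟩
    simp [φ, hi]

theorem isPrime_span_X_image [IsDomain R] (s : Set σ) :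
    (Ideal.span (X '' s : Set (MvPolynomial σ R))).IsPrime := by
  classical
  rw [← ker_aeval_ite_eq_span_X_image]
  exact RingHom.ker_isPrime _

theorem isPrime_span_X_pair [IsDomain R] (a b : σ) :
    (Ideal.span {X a, X b} : Ideal (MvPolynomial σ R)).IsPrime := by
  simpa [Set.image_pair] using isPrime_span_X_image (R := R) {a, b}

end MvPolynomial

section CoverIdeal

variable {K : Type} [Field K] {V : Type} {G : SimpleGraph V}

theorem coverIdeal_colon_prod_X {a b : V} (hab : G.Adj a b) {S : Finset V} (ha : a ∉ S)
    (hb : b ∉ S) (hS : IsVertexCover (G.deleteEdges {s(a, b)}) S) :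
    (coverIdeal K G).colon (Ideal.span {∏ i ∈ S, (X i : MvPolynomial V K)}) =
      Ideal.span {X a, X b} := by
  have hP := isPrime_span_X_pair (R := K) a b
  have hf : ∏ i ∈ S, X i ∉ (Ideal.span {X a, X b} : Ideal (MvPolynomial V K)) := by
    rw [hP.prod_mem_iff]
    rintro ⟨i, hi, hX⟩
    rw [← Set.image_pair, X_mem_span_X_image_iff] at hX
    rcases hX with rfl | rfl <;> contradiction
  refine le_antisymm (fun g hg => ?_) (fun g hg => ?_)
  · rw [Submodule.mem_colon_span_singleton, coverIdeal] at hg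
    simp only [Submodule.mem_iInf, smul_eq_mul] at hg
    exact (hP.mem_or_mem (hg a b hab)).resolve_right hf
  · rw [Submodule.mem_colon_span_singleton, coverIdeal]
    simp only [Submodule.mem_iInf, smul_eq_mul]
    intro u v huv
    by_cases he : s(u, v) = s(a, b)
    · rcases Sym2.eq_iff.1 he with ⟨rfl, rfl⟩ | ⟨rfl, rfl⟩
      · exact Ideal.mul_mem_right _ _ hg
      · rw [Set.pair_comm]; exact Ideal.mul_mem_right _ _ hg
    · refine Ideal.mul_mem_left _ g ?_
      rcases hS ((G.deleteEdges_adj ..).2 ⟨huv, he⟩) with h | h <;>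
        exact Ideal.mem_of_dvd _ (Finset.dvd_prod_of_mem X h) (Ideal.subset_span (by simp))

theorem vNumber_coverIdeal_le_card {a b : V} (hab : G.Adj a b) {S : Finset V} (ha : a ∉ S)
    (hb : b ∉ S) (hS : IsVertexCover (G.deleteEdges {s(a, b)}) S) :
    vNumber (coverIdeal K G) ≤ S.card :=
  Nat.sInf_le ⟨_, isHomogeneous_prod_X S, by
    rw [coverIdeal_colon_prod_X hab ha hb hS]
    exact isPrime_span_X_pair a b⟩

end CoverIdeal

section VertexCover

variable {V : Type} {G : SimpleGraph V}

theorem le_coverNumber {k : ℕ} (h : ∀ C, IsVertexCover G C → k ≤ C.ncard) :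
    k ≤ coverNumber G :=
  le_csInf ⟨_, Set.univ, fun _ _ _ => .inl trivial, rfl⟩ fun _ ⟨C, hC, hk⟩ => hk ▸ h C hC

theorem IsMinimalVertexCover.ncard_le_bigHeight [Finite V] {C : Set V}
    (hC : IsMinimalVertexCover G C) : C.ncard ≤ bigHeight G :=
  le_csSup ⟨Nat.card V, fun _ ⟨D, _, hk⟩ => hk ▸ Set.ncard_le_card D⟩ ⟨C, hC, rfl⟩

theorem isMinimalVertexCover_compl {D : Set V} (hind : G.IsIndepSet D)
    (hdom : ∀ v ∉ D, ∃ w ∈ D, G.Adj v w) : IsMinimalVertexCover G Dᶜ := by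
  refine ⟨fun u v huv => ?_, fun C hC hcov => hC.antisymm fun v hv => ?_⟩
  · exact not_and_or.1 fun h => hind h.1 h.2 huv.ne huv
  · obtain ⟨w, hw, hvw⟩ := hdom v hv
    exact (hcov hvw).resolve_right fun hwC => hC hwC hw

theorem IsVertexCover.card_edgeFinset_le_sum_degree [Fintype V] [DecidableEq V]
    [DecidableRel G.Adj] {C : Finset V} (hC : IsVertexCover G C) :
    G.edgeFinset.card ≤ ∑ v ∈ C, G.degree v := by
  calc G.edgeFinset.card ≤ (C.biUnion fun v => G.incidenceFinset v).card := by
        refine Finset.card_le_card fun e he => ?_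
        induction e using Sym2.ind with
        | _ u v =>
          rw [SimpleGraph.mem_edgeFinset, SimpleGraph.mem_edgeSet] at he
          simp only [Finset.mem_biUnion, SimpleGraph.mem_incidenceFinset]
          rcases hC he with h | h
          exacts [⟨u, h, he, Sym2.mem_mk_left u v⟩, ⟨v, h, he, Sym2.mem_mk_right u v⟩]
    _ ≤ ∑ v ∈ C, (G.incidenceFinset v).card := Finset.card_biUnion_le
    _ = ∑ v ∈ C, G.degree v := by simp only [SimpleGraph.card_incidenceFinset_eq_degree]

theorem IsVertexCover.card_le_two_mul_ncard [Fintype V] [DecidableRel G.Adj] {d : ℕ}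
    (hG : G.IsRegularOfDegree d) (hd : 0 < d) {C : Set V} (hC : IsVertexCover G C) :
    Fintype.card V ≤ 2 * C.ncard := by
  classical
  have hsum := G.sum_degrees_eq_twice_card_edges
  have hcover := IsVertexCover.card_edgeFinset_le_sum_degree (C := C.toFinset) (by simpa using hC)
  simp only [hG.degree_eq, Finset.sum_const, smul_eq_mul, Finset.card_univ] at hsum hcover
  rw [Set.ncard_eq_toFinset_card']
  nlinarith

end VertexCover

namespace SimpleGraph

variable {n : ℕ}

theorem cycleGraph_adj_iff_val (hn : 2 ≤ n) {u v : Fin n} :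
    (cycleGraph n).Adj u v ↔ u.val + 1 = v.val ∨ v.val + 1 = u.val ∨
      (u.val + 1 = n ∧ v.val = 0) ∨ (v.val + 1 = n ∧ u.val = 0) := by
  have key (x y : Fin n) : (x - y).val = 1 ↔ y.val + 1 = x.val ∨ (x.val = 0 ∧ y.val + 1 = n) := by
    rcases le_or_gt y x with h | h
    · rw [Fin.coe_sub_iff_le.2 h]; omega
    · rw [Fin.coe_sub_iff_lt.2 h]; omega
  rw [cycleGraph_adj', key, key]
  omega

theorem cycleGraph_isRegularOfDegree_two (hn : 3 ≤ n) : (cycleGraph n).IsRegularOfDegree 2 := by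
  obtain ⟨m, rfl⟩ := Nat.exists_eq_add_of_le' hn
  exact fun _ => cycleGraph_degree_three_le

theorem vNumber_coverIdeal_cycleGraph_le_half (K : Type) [Field K] (hn : 3 ≤ n) :
    vNumber (coverIdeal K (cycleGraph n)) ≤ n / 2 := by
  classical
  let S : Finset (Fin n) := {v | 2 ≤ v.val ∧ (v.val % 2 = 0 ∨ v.val + 1 = n)}
  have hS : S.card ≤ n / 2 := by
    refine (Finset.card_le_card_of_injOn (t := Finset.range (n / 2)) (fun v => (v.val - 1) / 2)
      (fun v hv => ?_) fun u hu v hv huv => ?_).trans_eq (Finset.card_range _)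
    · simp only [S, Finset.coe_filter, Set.mem_ofPred_eq, Finset.mem_univ, true_and] at hv
      simp only [Finset.coe_range, Set.mem_Iio]
      omega
    · simp only [S, Finset.coe_filter, Set.mem_ofPred_eq, Finset.mem_univ, true_and] at hu hv huv
      exact Fin.ext (by omega)
  refine (vNumber_coverIdeal_le_card (a := ⟨0, by omega⟩) (b := ⟨1, by omega⟩)
    ?_ ?_ ?_ ?_).trans hS
  · rw [cycleGraph_adj_iff_val (by omega)]; simp
  · simp [S]
  · simp [S]
  · intro u v huv
    rw [deleteEdges_adj, Set.mem_singleton_iff, Sym2.eq_iff, cycleGraph_adj_iff_val (by omega)]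
      at huv
    simp only [S, Finset.coe_filter, Finset.mem_univ, true_and, Set.mem_ofPred_eq, Fin.ext_iff]
      at huv ⊢
    omega

theorem succ_div_two_le_coverNumber_cycleGraph (hn : 3 ≤ n) :
    (n + 1) / 2 ≤ coverNumber (cycleGraph n) := by
  refine le_coverNumber fun C hC => ?_
  have := hC.card_le_two_mul_ncard (cycleGraph_isRegularOfDegree_two hn) two_pos
  rw [Fintype.card_fin] at this
  omega

theorem exists_isMinimalVertexCover_cycleGraph (hn : 3 ≤ n) (hn4 : n ≠ 4) :
    ∃ C : Set (Fin n), IsMinimalVertexCover (cycleGraph n) C ∧ n / 2 + 1 ≤ C.ncard := by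
  let D : Set (Fin n) := {v | v.val % 3 = 0 ∧ v.val + 1 < n ∨ v.val + 2 = n ∧ n % 3 = 1}
  have hind : (cycleGraph n).IsIndepSet D := by
    intro u hu v hv _ huv
    rw [cycleGraph_adj_iff_val (by omega)] at huv
    simp only [D, Set.mem_ofPred_eq] at hu hv
    omega
  have hdom : ∀ v ∉ D, ∃ w ∈ D, (cycleGraph n).Adj v w := by
    intro v hv
    simp only [D, Set.mem_ofPred_eq] at hv
    refine ⟨⟨if v.val % 3 = 2 then (if v.val + 1 = n then 0 else v.val + 1) else v.val - 1,
      by split_ifs <;> omega⟩, ?_, ?_⟩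
    · simp only [D, Set.mem_ofPred_eq]; split_ifs <;> omega
    · simp only [cycleGraph_adj_iff_val (by omega : 2 ≤ n)]; split_ifs <;> omega
  have hD : D.ncard ≤ (n + 2) / 3 := by
    refine (Set.ncard_le_ncard_of_injOn (t := Set.Iio ((n + 2) / 3)) (fun v => (v.val + 1) / 3)
      (fun v hv => ?_) (fun u hu v hv huv => ?_)).trans_eq (by simp)
    · simp only [D, Set.mem_ofPred_eq, Set.mem_Iio] at hv ⊢; omega
    · simp only [D, Set.mem_ofPred_eq] at hu hv huv; exact Fin.ext (by omega)
  refine ⟨Dᶜ, isMinimalVertexCover_compl hind hdom, ?_⟩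
  have := Set.ncard_add_ncard_compl D
  rw [Nat.card_eq_fintype_card, Fintype.card_fin] at this
  omega

end SimpleGraph

/-- For the cycle `C_n` (`n ≥ 3`), `v(J(C_n)) ≤ α₀(C_n)`; moreover, if
`n ≠ 4` then `v(J(C_n)) ≤ bight(I(C_n)) - 1`. -/
theorem vNumber_coverIdeal_cycleGraph_le
    {K : Type} [Field K] (n : ℕ) (hn : 3 ≤ n) :
    vNumber (coverIdeal K (SimpleGraph.cycleGraph n)) ≤
      coverNumber (SimpleGraph.cycleGraph n) ∧
    (n ≠ 4 → vNumber (coverIdeal K (SimpleGraph.cycleGraph n)) ≤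
      bigHeight (SimpleGraph.cycleGraph n) - 1) := by
  have hv := SimpleGraph.vNumber_coverIdeal_cycleGraph_le_half K hn
  refine ⟨hv.trans ((Nat.div_le_div_right n.le_succ).trans
    (SimpleGraph.succ_div_two_le_coverNumber_cycleGraph hn)), fun hn4 => ?_⟩
  obtain ⟨C, hC, hcard⟩ := SimpleGraph.exists_isMinimalVertexCover_cycleGraph hn hn4
  have := hC.ncard_le_bigHeight
  omega

end
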